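/- arXiv:1507.02222 — 6 statements merged into one kernel-verified Lean document; each statement's English description precedes it below -/
import Mathlib

section
/- Let 1 ≤ j ≤ L−2, let r > 0, and let x ≤ y be reals with x ∈ I_j, y ∈ I_j ∪ I_{j+1}, and y − x ≤ 2r. Then ∫_x^y f(t) dt ≤ (32 r L / δ) · Σ_{i=j+2}^{L} a_i, where a_i = ∫_{I_i} f(t) dt (so that Σ_{i=j+2}^{L} a_i = 2^{−(j+1)}). -/
/-!
On `I_i` with `i < L` the density is the constant `(8L/δ)·2^{-i}` and on `I_L` it is
`(8L/δ)·2^{1-L}`; as every `I_i` has length `δ/(8L)`, the masses are `a_i = 2^{-i}` and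
`a_L = 2^{1-L}`, and the geometric sum telescopes to `2^{-(j+1)}`. The integral is bounded by
the length `y - x ≤ 2r` times the value `(8L/δ)·2^{-j}` of the density on `I_j`, which
dominates it on all of `I_j ∪ I_{j+1}`.
-/

open MeasureTheory

/-- The density `f` of the distribution `dist(δ, k)` where `k = 2^L`. -/
noncomputable def distDensity (δ : ℝ) (L : ℕ) (x : ℝ) : ℝ :=
  if x < δ/8 ∨ δ/4 < x then 0
  else if δ/4 - δ/(8*(L:ℝ)) ≤ x then (8*(L:ℝ)/δ) * (2 / 2^L)
  else (8*(L:ℝ)/δ) * (1/2 : ℝ) ^ ((⌊(x - δ/8) / (δ/(8*(L:ℝ)))⌋).toNat + 1)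

/-- The `j`-th subinterval `I_j` of `[δ/8, δ/4]`, for `1 ≤ j ≤ L`. -/
noncomputable def intervalI (δ : ℝ) (L : ℕ) (j : ℕ) : Set ℝ :=
  if j = L then Set.Icc (δ/4 - δ/(8*(L:ℝ))) (δ/4)
  else Set.Ico (δ/8 + ((j:ℝ)-1)*(δ/(8*(L:ℝ)))) (δ/8 + (j:ℝ)*(δ/(8*(L:ℝ))))

namespace DistDensity

variable {δ : ℝ} {L : ℕ}

lemma intervalI_of_ne {i : ℕ} (hi : i ≠ L) :
    intervalI δ L i = Set.Ico (δ/8 + ((i:ℝ)-1)*(δ/(8*L))) (δ/8 + i*(δ/(8*L))) := by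
  simp [intervalI, hi]

lemma intervalI_self : intervalI δ L L = Set.Icc (δ/4 - δ/(8*L)) (δ/4) := by
  simp [intervalI]

lemma lt_of_mem_intervalI (hδ : 0 < δ) {i : ℕ} (hi : i < L) {t : ℝ}
    (ht : t ∈ intervalI δ L i) : t < δ/4 - δ/(8*L) := by
  rw [intervalI_of_ne hi.ne] at ht
  have hL : (L:ℝ) ≠ 0 := Nat.cast_ne_zero.2 (by omega)
  have hiL : (i:ℝ) + 1 ≤ L := by exact_mod_cast hi
  have hstep : ((i:ℝ) + 1) * (δ/(8*L)) ≤ δ/8 :=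
    calc ((i:ℝ) + 1) * (δ/(8*L)) ≤ L * (δ/(8*L)) := by gcongr
      _ = δ/8 := by field_simp
  linarith [ht.2]

lemma distDensity_nonneg (hδ : 0 ≤ δ) (t : ℝ) : 0 ≤ distDensity δ L t := by
  unfold distDensity
  split_ifs <;> positivity

lemma distDensity_le (hδ : 0 < δ) (hL : 0 < L) {j : ℕ} {t : ℝ}
    (ht₁ : δ/8 + ((j:ℝ)-1)*(δ/(8*L)) ≤ t) (ht₂ : t < δ/4 - δ/(8*L)) :
    distDensity δ L t ≤ 8*L/δ * (1/2)^j := by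
  have hlen : 0 < δ/(8*L) := by positivity
  have hfloor : (j:ℤ) - 1 ≤ ⌊(t - δ/8) / (δ/(8*L))⌋ := by
    rw [Int.le_floor, le_div_iff₀ hlen]
    push_cast
    linarith
  unfold distDensity
  split_ifs
  · positivity
  · linarith
  · exact mul_le_mul_of_nonneg_left (pow_le_pow_of_le_one (by norm_num) (by norm_num) (by omega))
      (by positivity)

lemma distDensity_of_mem_intervalI (hδ : 0 < δ) {i : ℕ} (hi : 1 ≤ i) (hiL : i < L) {t : ℝ}
    (ht : t ∈ intervalI δ L i) : distDensity δ L t = 8*L/δ * (1/2)^i := by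
  have hL : (0:ℝ) < L := Nat.cast_pos.2 (by omega)
  have hlen : 0 < δ/(8*L) := by positivity
  have ht₂ : t < δ/4 - δ/(8*L) := lt_of_mem_intervalI hδ hiL ht
  rw [intervalI_of_ne hiL.ne] at ht
  have hi' : (1:ℝ) ≤ i := by exact_mod_cast hi
  have hfloor : ⌊(t - δ/8) / (δ/(8*L))⌋ = (i:ℤ) - 1 := by
    rw [Int.floor_eq_iff, le_div_iff₀ hlen, div_lt_iff₀ hlen]
    push_cast
    constructor <;> linarith [ht.1, ht.2]
  have hnot : ¬(t < δ/8 ∨ δ/4 < t) := by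
    rw [not_or, not_lt, not_lt]
    constructor <;> nlinarith [ht.1]
  unfold distDensity
  rw [if_neg hnot, if_neg (not_le.2 ht₂), hfloor]
  congr 2
  omega

lemma distDensity_of_mem_intervalI_self (hδ : 0 ≤ δ) (hL : 1 ≤ L) {t : ℝ}
    (ht : t ∈ intervalI δ L L) : distDensity δ L t = 8*L/δ * (2/2^L) := by
  rw [intervalI_self] at ht
  have hL' : (1:ℝ) ≤ L := by exact_mod_cast hL
  have hlen : δ/(8*L) ≤ δ/8 := div_le_div_of_nonneg_left hδ (by norm_num) (by linarith)
  have hnot : ¬(t < δ/8 ∨ δ/4 < t) := by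
    rw [not_or, not_lt, not_lt]
    exact ⟨by linarith [ht.1], ht.2⟩
  unfold distDensity
  rw [if_neg hnot, if_pos ht.1]

lemma integral_intervalI (hδ : 0 < δ) {i : ℕ} (hi : 1 ≤ i) (hiL : i < L) :
    ∫ t in intervalI δ L i, distDensity δ L t = (1/2)^i := by
  have hL : (0:ℝ) < L := Nat.cast_pos.2 (by omega)
  rw [setIntegral_congr_fun (by rw [intervalI_of_ne hiL.ne]; exact measurableSet_Ico)
    (fun t ht => distDensity_of_mem_intervalI hδ hi hiL ht), setIntegral_const,
    intervalI_of_ne hiL.ne, Real.volume_real_Ico_of_le (by gcongr; linarith), smul_eq_mul]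
  field_simp
  ring

lemma integral_intervalI_self (hδ : 0 < δ) (hL : 1 ≤ L) :
    ∫ t in intervalI δ L L, distDensity δ L t = 2 * (1/2)^L := by
  have hL' : (0:ℝ) < L := Nat.cast_pos.2 hL
  rw [setIntegral_congr_fun (by rw [intervalI_self]; exact measurableSet_Icc)
    (fun t ht => distDensity_of_mem_intervalI_self hδ.le hL ht), setIntegral_const,
    intervalI_self, Real.volume_real_Icc_of_le (by linarith [show 0 < δ/(8*L) by positivity]),
    smul_eq_mul, one_div_pow]
  field_simp
  ring

lemma sum_integral_intervalI (hδ : 0 < δ) {m : ℕ} (hm : 1 ≤ m) (hmL : m ≤ L) :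
    ∑ i ∈ Finset.Icc m L, ∫ t in intervalI δ L i, distDensity δ L t = 2 * (1/2)^m := by
  rw [← Finset.Ico_insert_right hmL, Finset.sum_insert Finset.right_notMem_Ico,
    integral_intervalI_self hδ (hm.trans hmL),
    Finset.sum_congr rfl fun i hi => integral_intervalI hδ (hm.trans (Finset.mem_Ico.1 hi).1)
      (Finset.mem_Ico.1 hi).2,
    geom_sum_Ico' (by norm_num) hmL]
  ring

lemma integral_distDensity_le (hδ : 0 < δ) (hL : 0 < L) {j : ℕ} {x y : ℝ} (hxy : x ≤ y)
    (hx : δ/8 + ((j:ℝ)-1)*(δ/(8*L)) ≤ x) (hy : y < δ/4 - δ/(8*L)) :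
    ∫ t in x..y, distDensity δ L t ≤ (y - x) * (8*L/δ * (1/2)^j) := by
  have hbound : ∀ t ∈ Set.uIoc x y, ‖distDensity δ L t‖ ≤ 8*L/δ * (1/2)^j := by
    intro t ht
    rw [Set.uIoc_of_le hxy] at ht
    rw [Real.norm_of_nonneg (distDensity_nonneg hδ.le t)]
    exact distDensity_le hδ hL (by linarith [ht.1]) (by linarith [ht.2])
  calc ∫ t in x..y, distDensity δ L t
      ≤ ‖∫ t in x..y, distDensity δ L t‖ := Real.le_norm_self _
    _ ≤ 8*L/δ * (1/2)^j * |y - x| := intervalIntegral.norm_integral_le_of_norm_le_const hbound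
    _ = (y - x) * (8*L/δ * (1/2)^j) := by rw [abs_of_nonneg (by linarith)]; ring

end DistDensity

open DistDensity in
theorem integral_between_le_general (δ : ℝ) (hδ : 0 < δ) (L : ℕ) (hL : 2 ≤ L)
    (j : ℕ) (hj2 : j ≤ L - 2) (r : ℝ)
    (x y : ℝ) (hxy : x ≤ y) (hx : x ∈ intervalI δ L j)
    (hy : y ∈ intervalI δ L j ∪ intervalI δ L (j+1)) (hyx : y - x ≤ 2*r) :
    ((∑ i ∈ Finset.Icc (j+2) L, ∫ t in intervalI δ L i, distDensity δ L t)
        = (1/2 : ℝ)^(j+1)) ∧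
    (∫ t in x..y, distDensity δ L t)
        ≤ (32*r*(L:ℝ)/δ) *
            ∑ i ∈ Finset.Icc (j+2) L, ∫ t in intervalI δ L i, distDensity δ L t := by
  have hsum : ∑ i ∈ Finset.Icc (j+2) L, ∫ t in intervalI δ L i, distDensity δ L t
      = (1/2 : ℝ)^(j+1) := by
    rw [sum_integral_intervalI hδ (by omega) (by omega)]
    ring
  refine ⟨hsum, ?_⟩
  have hx₁ : δ/8 + ((j:ℝ)-1)*(δ/(8*L)) ≤ x := by
    rw [intervalI_of_ne (by omega)] at hx
    exact hx.1
  have hy₂ : y < δ/4 - δ/(8*L) := by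
    rcases hy with hy | hy
    · exact lt_of_mem_intervalI hδ (by omega) hy
    · exact lt_of_mem_intervalI hδ (by omega) hy
  calc ∫ t in x..y, distDensity δ L t
      ≤ (y - x) * (8*L/δ * (1/2)^j) := integral_distDensity_le hδ (by omega) hxy hx₁ hy₂
    _ ≤ 2*r * (8*L/δ * (1/2)^j) := by gcongr
    _ = 32*r*L/δ * ∑ i ∈ Finset.Icc (j+2) L, ∫ t in intervalI δ L i, distDensity δ L t := by
      rw [hsum]
      ring

/-- Let `1 ≤ j ≤ L-2`, let `r > 0`, and let `x ≤ y` be reals with `x ∈ I_j`,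
`y ∈ I_j ∪ I_{j+1}` and `y - x ≤ 2r`. Then
`∫_x^y f(t) dt ≤ (32 r L / δ) · Σ_{i=j+2}^{L} a_i`, where
`a_i = ∫_{I_i} f(t) dt` (so that `Σ_{i=j+2}^{L} a_i = 2^{-(j+1)}`). -/
theorem integral_between_le (δ : ℝ) (hδ : 0 < δ) (L : ℕ) (hL : 2 ≤ L)
    (j : ℕ) (hj1 : 1 ≤ j) (hj2 : j ≤ L - 2) (r : ℝ) (hr : 0 < r)
    (x y : ℝ) (hxy : x ≤ y) (hx : x ∈ intervalI δ L j)
    (hy : y ∈ intervalI δ L j ∪ intervalI δ L (j+1)) (hyx : y - x ≤ 2*r) :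
    ((∑ i ∈ Finset.Icc (j+2) L, ∫ t in intervalI δ L i, distDensity δ L t)
        = (1/2 : ℝ)^(j+1)) ∧
    (∫ t in x..y, distDensity δ L t)
        ≤ (32*r*(L:ℝ)/δ) *
            ∑ i ∈ Finset.Icc (j+2) L, ∫ t in intervalI δ L i, distDensity δ L t :=
  integral_between_le_general δ hδ L hL j hj2 r x y hxy hx hy hyx
end

section
/- Let r > 0 and let x ≤ y be reals with x ≥ δ/8 + (L−2)·δ/(8L) and y − x ≤ 2r. Then ∫_x^y f(t) dt ≤ 32 r L / (k δ). -/
open MeasureTheory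

/-- Let `r > 0` and let `x ≤ y` be reals with `x ≥ δ/8 + (L-2)·δ/(8L)` and
`y - x ≤ 2r`. Then `∫_x^y f(t) dt ≤ 32 r L / (k δ)`, where `k = 2^L`. -/
theorem integral_far_le (δ : ℝ) (hδ : 0 < δ) (L : ℕ) (hL : 2 ≤ L)
    (r : ℝ) (hr : 0 < r) (x y : ℝ) (hxy : x ≤ y)
    (hx : δ/8 + ((L:ℝ)-2)*(δ/(8*(L:ℝ))) ≤ x) (hyx : y - x ≤ 2*r) :
    (∫ t in x..y, distDensity δ L t) ≤ 32*r*(L:ℝ)/(2^L*δ) := by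
  have hL0 : (0:ℝ) < L := by exact_mod_cast Nat.lt_of_lt_of_le (by norm_num) hL
  set c : ℝ := (8*(L:ℝ)/δ) * (2 / 2^L) with hc
  have hc0 : 0 ≤ c := by positivity
  have hbound : ∀ t ∈ Set.uIoc x y, ‖distDensity δ L t‖ ≤ c := by
    intro t ht
    rw [Set.uIoc_of_le hxy] at ht
    have hxt : x < t := ht.1
    unfold distDensity
    split_ifs with h1 h2
    · simpa using hc0
    · rw [Real.norm_eq_abs, abs_of_nonneg (by positivity)]
    · rw [Real.norm_eq_abs, abs_of_nonneg (by positivity)]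
      have hδL : (0:ℝ) < δ/(8*(L:ℝ)) := by positivity
      have hv : ((L:ℝ) - 2) ≤ (t - δ/8) / (δ/(8*(L:ℝ))) := by
        rw [le_div_iff₀ hδL]
        nlinarith [hx, hxt]
      have hfloor : (L:ℤ) - 2 ≤ ⌊(t - δ/8) / (δ/(8*(L:ℝ)))⌋ := by
        apply Int.le_floor.mpr
        push_cast
        exact hv
      have hn : L - 1 ≤ (⌊(t - δ/8) / (δ/(8*(L:ℝ)))⌋).toNat + 1 := by
        omega
      have hpow : (1/2:ℝ) ^ ((⌊(t - δ/8) / (δ/(8*(L:ℝ)))⌋).toNat + 1) ≤ (1/2:ℝ)^(L-1) :=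
        pow_le_pow_of_le_one (by norm_num) (by norm_num) hn
      have heq : (1/2:ℝ)^(L-1) = 2 / 2^L := by
        have h2 : (2:ℝ)^L = 2 * 2^(L-1) := by
          rw [← pow_succ']
          congr 1
          omega
        rw [h2]
        rw [one_div, inv_pow]
        field_simp
      calc (8*(L:ℝ)/δ) * (1/2:ℝ) ^ ((⌊(t - δ/8) / (δ/(8*(L:ℝ)))⌋).toNat + 1)
          ≤ (8*(L:ℝ)/δ) * (1/2:ℝ)^(L-1) := by
            apply mul_le_mul_of_nonneg_left hpow (by positivity)
        _ = c := by rw [heq]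
  have h := intervalIntegral.norm_integral_le_of_norm_le_const hbound
  have h2 : (∫ t in x..y, distDensity δ L t) ≤ c * |y - x| :=
    le_trans (le_abs_self _) h
  have h3 : c * |y - x| ≤ c * (2*r) := by
    apply mul_le_mul_of_nonneg_left _ hc0
    rw [abs_of_nonneg (by linarith)]
    exact hyx
  have h4 : c * (2*r) = 32*r*(L:ℝ)/(2^L*δ) := by
    rw [hc]
    have : (2:ℝ)^L ≠ 0 := by positivity
    field_simp
    ring
  linarith [h2, h3, h4.symm ▸ h3]
end

section
/- There exists an absolute constant c > 0 with the following property. Let (Z,d) be a finite metric space, let P = {p_1, …, p_m} ⊆ Z with m ≥ 2 and diam(P) > 0, and let n ≥ max(m,4) be a power of two. Let β_1, …, β_m be independent random variables, each distributed with the density f of dist(diam(P), n), and define the random blocks P_i = {x ∈ P \ (P_1 ∪ ⋯ ∪ P_{i−1}) : d(x, p_i) ≤ β_i} for i = 1, …, m. Then for every y ∈ Z and every real r with 0 ≤ r ≤ diam(P)/(16 log₂ n), the expected number of indices i with P_i ∩ B(y,r) ≠ ∅ is at most 1 + c · (r / diam(P)) · log₂ n, where B(y,r) = {z ∈ Z :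 d(z,y) ≤ r}. -/
/-!
Write `d i = dist (p i) y`. Once some `β j ≥ d j + r`, block `j` takes every point of the ball not
yet carved, so apart from at most one such block, every block `i` meeting the ball is *cut*:
`β i ∈ [d i - r, d i + r)` while `β j < d j + r` for all `j < i`. By independence the `i`-th cut
has probability `sᵢ ∏_{j<i} q_j`, with `q_j = ℙ(β < d j + r)` and `sᵢ = ℙ(β ∈ [d i - r, d i + r))`.
The density of `dist(δ, 2^L)` is constant on steps of width `δ/(8L)` and halves from one step to
the next, so with `a = 64 r L / δ` either `sᵢ ≤ a (1 - qᵢ)` (compare with the next step to the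
right) or the interval lies in the last steps, where the density is `O(L / (δ 2^L))` and
`sᵢ ≤ a / 2^L`. Since `∑ᵢ (1 - qᵢ) ∏_{j<i} q_j = 1 - ∏ᵢ qᵢ ≤ 1`, the expected number of cuts is at
most `a + m a / 2^L ≤ 2a` as `m ≤ 2^L`.
-/

open MeasureTheory
open scoped Classical

open Set Metric ProbabilityTheory
open scoped ENNReal Finset

def IsSequentialCarving {Z ι : Type*} [PseudoMetricSpace Z] [LT ι] (P : Set Z) (p : ι → Z)
    (b : ι → ℝ) (Q : ι → Set Z) : Prop :=
  ∀ i, Q i = {x | x ∈ P ∧ (∀ j, j < i → x ∉ Q j) ∧ dist x (p i) ≤ b i}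

namespace IsSequentialCarving

variable {Z ι : Type*} [PseudoMetricSpace Z] [LinearOrder ι] {P : Set Z} {p : ι → Z} {b : ι → ℝ}
  {Q : ι → Set Z} {y x : Z} {r : ℝ} {i j : ι}

lemma exists_le_mem (hQ : IsSequentialCarving P p b Q) (hj : dist (p j) y + r ≤ b j)
    (hx : x ∈ P) (hxy : dist x y ≤ r) : ∃ k ≤ j, x ∈ Q k := by
  by_contra! hnot
  refine hnot j le_rfl ?_
  rw [hQ j]
  refine ⟨hx, fun k hk => hnot k hk.le, ?_⟩
  linarith [dist_triangle_right x (p j) y]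

lemma inter_closedBall_eq_empty (hQ : IsSequentialCarving P p b Q) (hji : j < i)
    (hj : dist (p j) y + r ≤ b j) : Q i ∩ closedBall y r = ∅ := by
  refine eq_empty_of_forall_notMem fun x ⟨hxi, hxy⟩ => ?_
  rw [hQ i] at hxi
  obtain ⟨k, hkj, hxk⟩ := hQ.exists_le_mem hj hxi.1 (mem_closedBall.1 hxy)
  exact hxi.2.1 k (hkj.trans_lt hji) hxk

/-- A block `i` with `b i ≥ dist (p i) y + r` swallows what is left of the ball, so at most one
such block meets it. -/
lemma card_meeting_closedBall_le [Fintype ι] (hQ : IsSequentialCarving P p b Q) :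
    #{i | (Q i ∩ closedBall y r).Nonempty} ≤
      #{i | b i ∈ Ico (dist (p i) y - r) (dist (p i) y + r) ∧
        ∀ j < i, b j < dist (p j) y + r} + 1 := by
  set T : Finset ι := {i | (Q i ∩ closedBall y r).Nonempty}
  have hcut : {i ∈ T | b i < dist (p i) y + r} ⊆
      ({i | b i ∈ Ico (dist (p i) y - r) (dist (p i) y + r) ∧
        ∀ j < i, b j < dist (p j) y + r} : Finset ι) := by
    intro i hi
    simp only [T, Finset.mem_filter, Finset.mem_univ, true_and] at hi ⊢
    obtain ⟨⟨x, hxi, hxy⟩, hbi⟩ := hi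
    have hx := hxi
    rw [hQ i] at hx
    refine ⟨⟨?_, hbi⟩, fun j hji => ?_⟩
    · linarith [dist_triangle (p i) x y, dist_comm x (p i), mem_closedBall.1 hxy, hx.2.2]
    · by_contra! hj
      exact (hQ.inter_closedBall_eq_empty hji hj).subset ⟨hxi, hxy⟩
  have hexhaust : #{i ∈ T | ¬b i < dist (p i) y + r} ≤ 1 := by
    refine Finset.card_le_one.2 fun i hi i' hi' => ?_
    simp only [T, Finset.mem_filter, Finset.mem_univ, true_and, not_lt] at hi hi'
    by_contra hne
    rcases lt_or_gt_of_ne hne with hlt | hlt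
    · exact hi'.1.ne_empty (hQ.inter_closedBall_eq_empty hlt hi.2)
    · exact hi.1.ne_empty (hQ.inter_closedBall_eq_empty hlt hi'.2)
  rw [← Finset.card_filter_add_card_filter_not (fun i => b i < dist (p i) y + r)]
  exact add_le_add (Finset.card_le_card hcut) hexhaust

end IsSequentialCarving

section FirstCut

variable {ι : Type*} [LinearOrder ι] [Fintype ι]

lemma sum_mul_prod_lt_le {s q : ι → ℝ} {a b : ℝ} (ha : 0 ≤ a) (hb : 0 ≤ b)
    (hq₀ : ∀ i, 0 ≤ q i) (hq₁ : ∀ i, q i ≤ 1) (hs : ∀ i, s i ≤ a * (1 - q i) + b) :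
    ∑ i, s i * ∏ j with j < i, q j ≤ a + Fintype.card ι * b := by
  have htelescope : ∑ i, (1 - q i) * ∏ j with j < i, q j = 1 - ∏ i, q i := by
    have := Finset.prod_one_sub_ordered Finset.univ fun i => 1 - q i
    simp only [sub_sub_cancel] at this
    linarith
  have hprod₀ : ∀ i, 0 ≤ ∏ j with j < i, q j := fun i => Finset.prod_nonneg fun j _ => hq₀ j
  have hprod₁ : ∀ i, ∏ j with j < i, q j ≤ 1 := fun i =>
    Finset.prod_le_one (fun j _ => hq₀ j) fun j _ => hq₁ j
  calc ∑ i, s i * ∏ j with j < i, q j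
      ≤ ∑ i, (a * ((1 - q i) * ∏ j with j < i, q j) + b) := by
        refine Finset.sum_le_sum fun i _ => ?_
        nlinarith [hs i, hprod₀ i, hprod₁ i]
    _ = a * (1 - ∏ i, q i) + Fintype.card ι * b := by
        rw [Finset.sum_add_distrib, ← Finset.mul_sum, htelescope, Finset.sum_const,
          Finset.card_univ, nsmul_eq_mul]
    _ ≤ a + Fintype.card ι * b := by
        nlinarith [Finset.prod_nonneg fun i (_ : i ∈ Finset.univ) => hq₀ i]

variable {Ω : Type*} [MeasurableSpace Ω] {μ : Measure Ω} {β : ι → Ω → ℝ}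

lemma ProbabilityTheory.iIndepFun.measure_mem_and_forall_lt_mem (hind : iIndepFun β μ)
    {S : Set ℝ} {T : ι → Set ℝ} (hS : MeasurableSet S) (hT : ∀ j, MeasurableSet (T j)) (i : ι) :
    μ {ω | β i ω ∈ S ∧ ∀ j < i, β j ω ∈ T j} =
      μ (β i ⁻¹' S) * ∏ j with j < i, μ (β j ⁻¹' T j) := by
  set U : ι → Set ℝ := fun j => if j = i then S else T j
  have hU : ∀ j, MeasurableSet (U j) := fun j => by
    simp only [U]; split_ifs; exacts [hS, hT j]
  have hevent : {ω | β i ω ∈ S ∧ ∀ j < i, β j ω ∈ T j} =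
      ⋂ j ∈ insert i ({j | j < i} : Finset ι), β j ⁻¹' U j := by
    ext ω
    simp only [U, Finset.mem_insert, Finset.mem_filter, Finset.mem_univ, true_and, mem_iInter,
      mem_preimage, mem_ofPred_eq]
    constructor
    · rintro ⟨hi, hlt⟩ j (rfl | hj)
      · rwa [if_pos rfl]
      · rw [if_neg hj.ne]; exact hlt j hj
    · intro h
      refine ⟨by simpa using h i (Or.inl rfl), fun j hj => ?_⟩
      simpa [if_neg hj.ne] using h j (Or.inr hj)
  rw [hevent, hind.meas_biInter fun j _ => ⟨U j, hU j, rfl⟩, Finset.prod_insert (by simp)]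
  congr 1
  · simp only [U, if_pos]
  · exact Finset.prod_congr rfl fun j hj => by simp only [U, if_neg (Finset.mem_filter.1 hj).2.ne]

lemma measurableSet_mem_and_forall_lt_mem (hβ : ∀ i, Measurable (β i)) {S : Set ℝ}
    {T : ι → Set ℝ} (hS : MeasurableSet S) (hT : ∀ j, MeasurableSet (T j)) (i : ι) :
    MeasurableSet {ω | β i ω ∈ S ∧ ∀ j < i, β j ω ∈ T j} := by
  simp only [ofPred_and, ofPred_forall]
  exact (hβ i hS).inter <| .iInter fun j => .iInter fun _ => hβ j (hT j)

lemma integral_sum_meeting_closedBall_le {Z : Type*} [PseudoMetricSpace Z]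
    [IsProbabilityMeasure μ] (hβ : ∀ i, Measurable (β i)) {P : Set Z} {p : ι → Z}
    {Q : ι → Ω → Set Z}
    (hQ : ∀ ω, IsSequentialCarving P p (fun i => β i ω) fun i => Q i ω) (y : Z) (r : ℝ) :
    ∫ ω, (∑ i, if (Q i ω ∩ closedBall y r).Nonempty then (1 : ℝ) else 0) ∂μ ≤
      1 + ∑ i, μ.real {ω | β i ω ∈ Ico (dist (p i) y - r) (dist (p i) y + r) ∧
        ∀ j < i, β j ω ∈ Iio (dist (p j) y + r)} := by
  set A : ι → Set Ω := fun i => {ω | β i ω ∈ Ico (dist (p i) y - r) (dist (p i) y + r) ∧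
    ∀ j < i, β j ω ∈ Iio (dist (p j) y + r)}
  have hA : ∀ i, MeasurableSet (A i) := fun i =>
    measurableSet_mem_and_forall_lt_mem hβ measurableSet_Ico (fun _ => measurableSet_Iio) i
  have hpointwise : ∀ ω, (∑ i, if (Q i ω ∩ closedBall y r).Nonempty then (1 : ℝ) else 0) ≤
      1 + ∑ i, (A i).indicator (1 : Ω → ℝ) ω := by
    intro ω
    simp only [indicator_apply, Pi.one_apply]
    rw [Finset.sum_boole, Finset.sum_boole, add_comm]
    exact_mod_cast (hQ ω).card_meeting_closedBall_le
  have hindicator : ∀ i, Integrable ((A i).indicator (1 : Ω → ℝ)) μ := fun i =>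
    (integrable_const 1).indicator (hA i)
  have hint : Integrable (fun ω => 1 + ∑ i, (A i).indicator (1 : Ω → ℝ) ω) μ :=
    (integrable_const 1).add (integrable_finsetSum _ fun i _ => hindicator i)
  calc _ ≤ ∫ ω, (1 + ∑ i, (A i).indicator (1 : Ω → ℝ) ω) ∂μ :=
        integral_mono_of_nonneg (Filter.Eventually.of_forall fun ω => by positivity) hint
          (Filter.Eventually.of_forall hpointwise)
    _ = _ := by
        rw [integral_add (integrable_const 1) (integrable_finsetSum _ fun i _ => hindicator i),
          integral_finsetSum _ fun i _ => hindicator i]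
        simp only [integral_const, probReal_univ, smul_eq_mul, mul_one,
          integral_indicator_one (hA _)]
        rfl

lemma sum_measureReal_mem_and_forall_lt_mem_le (hβ : ∀ i, Measurable (β i))
    (hind : iIndepFun β μ) {ν : Measure ℝ} [IsProbabilityMeasure ν]
    (hlaw : ∀ i, μ.map (β i) = ν) {a b r : ℝ} (ha : 0 ≤ a) (hb : 0 ≤ b)
    (hν : ∀ t, ν.real (Ico (t - r) (t + r)) ≤ a * ν.real (Ici (t + r)) + b) (d : ι → ℝ) :
    ∑ i, μ.real {ω | β i ω ∈ Ico (d i - r) (d i + r) ∧ ∀ j < i, β j ω ∈ Iio (d j + r)} ≤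
      a + Fintype.card ι * b := by
  have hpreimage : ∀ i {S : Set ℝ}, MeasurableSet S → μ (β i ⁻¹' S) = ν S := fun i S hS => by
    rw [← hlaw i, Measure.map_apply (hβ i) hS]
  have hevent : ∀ i,
      μ.real {ω | β i ω ∈ Ico (d i - r) (d i + r) ∧ ∀ j < i, β j ω ∈ Iio (d j + r)} =
        ν.real (Ico (d i - r) (d i + r)) * ∏ j with j < i, ν.real (Iio (d j + r)) := fun i => by
    rw [measureReal_def, hind.measure_mem_and_forall_lt_mem measurableSet_Ico
      (fun _ => measurableSet_Iio), hpreimage i measurableSet_Ico,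
      Finset.prod_congr rfl fun j _ => hpreimage j measurableSet_Iio, ENNReal.toReal_mul,
      ENNReal.toReal_prod]
    rfl
  rw [Finset.sum_congr rfl fun i _ => hevent i]
  refine sum_mul_prod_lt_le ha hb (fun _ => measureReal_nonneg) (fun _ => measureReal_le_one)
    fun i => ?_
  have := hν (d i)
  rwa [← compl_Iio, probReal_compl_eq_one_sub measurableSet_Iio] at this

end FirstCut

section WithDensity

variable {α : Type*} [MeasurableSpace α] {μ : Measure α} {g : α → ℝ≥0∞} {s : Set α} {c : ℝ≥0∞}

lemma withDensity_apply_le_mul (hs : MeasurableSet s) (hg : ∀ x ∈ s, g x ≤ c) :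
    μ.withDensity g s ≤ c * μ s := by
  rw [withDensity_apply _ hs, ← setLIntegral_const]
  exact setLIntegral_mono' hs hg

lemma mul_le_withDensity_apply (hs : MeasurableSet s) (hg : ∀ x ∈ s, c ≤ g x) :
    c * μ s ≤ μ.withDensity g s := by
  rw [withDensity_apply _ hs, ← setLIntegral_const]
  exact setLIntegral_mono' hs hg

end WithDensity

section Density

variable {δ : ℝ} {L : ℕ} {x y : ℝ}

lemma distDensity_of_lt (hx : x < δ / 8) : distDensity δ L x = 0 := by
  simp [distDensity, hx]

lemma distDensity_of_gt (hx : δ / 4 < x) : distDensity δ L x = 0 := by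
  simp [distDensity, hx]

lemma distDensity_nonneg (hδ : 0 ≤ δ) : 0 ≤ distDensity δ L x := by
  unfold distDensity
  split_ifs <;> positivity

lemma distDensity_of_mem_Icc (hδ : 0 < δ) (hL : L ≠ 0) (hx : x ∈ Icc (δ / 8) (δ / 4)) :
    distDensity δ L x =
      8 * L / δ / 2 ^ min (⌊(x - δ / 8) / (δ / (8 * L))⌋₊ + 1) (L - 1) := by
  have hL' : (0 : ℝ) < L := by positivity
  have hh : 0 < δ / (8 * L) := by positivity
  rw [distDensity, if_neg (by rintro (h | h) <;> linarith [hx.1, hx.2])]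
  split_ifs with htop
  · have : L - 1 ≤ ⌊(x - δ / 8) / (δ / (8 * L))⌋₊ := by
      refine Nat.le_floor ?_
      rw [le_div_iff₀ hh, Nat.cast_pred (Nat.pos_of_ne_zero hL)]
      field_simp at htop ⊢
      linarith
    rw [min_eq_right (by omega), ← Nat.sub_add_cancel (Nat.one_le_iff_ne_zero.2 hL), pow_succ,
      Nat.add_sub_cancel]
    field_simp
  · have : ⌊(x - δ / 8) / (δ / (8 * L))⌋₊ < L - 1 := by
      refine (Nat.floor_lt (div_nonneg (by linarith [hx.1]) hh.le)).2 ?_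
      rw [div_lt_iff₀ hh, Nat.cast_pred (Nat.pos_of_ne_zero hL)]
      field_simp at htop ⊢
      linarith
    rw [min_eq_left (by omega), Int.floor_toNat, one_div_pow, mul_one_div]

lemma distDensity_antitoneOn (hδ : 0 < δ) (hL : L ≠ 0) :
    AntitoneOn (distDensity δ L) (Icc (δ / 8) (δ / 4)) := by
  intro x hx y hy hxy
  rw [distDensity_of_mem_Icc hδ hL hx, distDensity_of_mem_Icc hδ hL hy]
  gcongr
  norm_num

lemma distDensity_le_four_mul (hδ : 0 < δ) (hL : L ≠ 0) (hx : δ / 8 ≤ x) (hxy : x ≤ y)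
    (hy : y ≤ δ / 4) (hyx : y ≤ x + 2 * (δ / (8 * L))) :
    distDensity δ L x ≤ 4 * distDensity δ L y := by
  have hh : 0 < δ / (8 * L) := by positivity
  rw [distDensity_of_mem_Icc hδ hL ⟨hx, by linarith⟩,
    distDensity_of_mem_Icc hδ hL ⟨by linarith, hy⟩]
  have hfloor : ⌊(y - δ / 8) / (δ / (8 * L))⌋₊ ≤ ⌊(x - δ / 8) / (δ / (8 * L))⌋₊ + 2 := by
    rw [← Nat.floor_add_ofNat (div_nonneg (by linarith) hh.le)]
    refine Nat.floor_le_floor ?_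
    rw [div_add' _ _ _ hh.ne']
    gcongr
    linarith
  calc 8 * L / δ / 2 ^ min (⌊(x - δ / 8) / (δ / (8 * L))⌋₊ + 1) (L - 1)
      = 4 * (8 * L / δ / 2 ^ (min (⌊(x - δ / 8) / (δ / (8 * L))⌋₊ + 1) (L - 1) + 2)) := by
        rw [pow_add]; ring
    _ ≤ _ := by
        gcongr
        · norm_num
        · omega

lemma distDensity_le_of_gt (hδ : 0 < δ) (hL : 2 ≤ L) (hx : δ / 4 - 2 * (δ / (8 * L)) < x) :
    distDensity δ L x ≤ 8 * L / δ / 2 ^ (L - 1) := by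
  rcases le_or_gt x (δ / 4) with hx4 | hx4
  · have hh : 0 < δ / (8 * L) := by positivity
    have hquarter : δ / 4 = δ / 8 + L * (δ / (8 * L)) := by field_simp; ring
    have hLh : 2 * (δ / (8 * L)) ≤ L * (δ / (8 * L)) := by gcongr; exact_mod_cast hL
    have hL2 : L - 2 ≤ ⌊(x - δ / 8) / (δ / (8 * L))⌋₊ := by
      refine Nat.le_floor ?_
      rw [le_div_iff₀ hh, Nat.cast_sub hL]
      push_cast
      linarith
    rw [distDensity_of_mem_Icc hδ (by omega) ⟨by linarith, hx4⟩, min_eq_right (by omega)]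
  · rw [distDensity_of_gt hx4]
    positivity

end Density

noncomputable def distMeasure (δ : ℝ) (L : ℕ) : Measure ℝ :=
  volume.withDensity fun x => ENNReal.ofReal (distDensity δ L x)

section DistMeasure

variable {δ : ℝ} {L : ℕ} {r s t : ℝ}

lemma distMeasure_Iio_eq_zero : distMeasure δ L (Iio (δ / 8)) = 0 :=
  nonpos_iff_eq_zero.1 <| (withDensity_apply_le_mul (c := 0) measurableSet_Iio
    fun x hx => by rw [distDensity_of_lt hx, ENNReal.ofReal_zero]).trans_eq (zero_mul _)

lemma distMeasure_Ico_le_of_gt (hδ : 0 < δ) (hL : 2 ≤ L) (hs : δ / 4 - 2 * (δ / (8 * L)) < s) :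
    distMeasure δ L (Ico s t) ≤ ENNReal.ofReal (8 * L / δ / 2 ^ (L - 1) * (t - s)) := by
  refine (withDensity_apply_le_mul measurableSet_Ico fun x hx =>
    ENNReal.ofReal_le_ofReal (distDensity_le_of_gt hδ hL (hs.trans_le hx.1))).trans_eq ?_
  rw [Real.volume_Ico, ← ENNReal.ofReal_mul (by positivity)]

/-- The density drops by at most a factor four from `[t - r, t + r)` to the window
`[t + r, t + r + δ/(8L))`. -/
lemma distMeasure_Ico_le_mul_Ici (hδ : 0 < δ) (hL : L ≠ 0) (hr : 0 ≤ r)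
    (hrh : 2 * r ≤ δ / (8 * L)) (ht : δ / 8 ≤ t + r) (htL : t + r + δ / (8 * L) ≤ δ / 4) :
    distMeasure δ L (Ico (t - r) (t + r)) ≤
      ENNReal.ofReal (64 * r * L / δ) * distMeasure δ L (Ici (t + r)) := by
  set h := δ / (8 * L) with h_def
  have hh : 0 < h := by positivity
  set M := distDensity δ L (t + r + h)
  have hM : 0 ≤ M := distDensity_nonneg hδ.le
  have hinterval : distMeasure δ L (Ico (t - r) (t + r)) ≤
      ENNReal.ofReal (4 * M) * ENNReal.ofReal (2 * r) := by
    rw [← show t + r - (t - r) = 2 * r by ring, ← Real.volume_Ico]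
    refine withDensity_apply_le_mul measurableSet_Ico fun x hx => ENNReal.ofReal_le_ofReal ?_
    rcases lt_or_ge x (δ / 8) with hx8 | hx8
    · rw [distDensity_of_lt hx8]; positivity
    · exact distDensity_le_four_mul hδ hL hx8 (by linarith [hx.2]) htL (by linarith [hx.1])
  have hwindow : ENNReal.ofReal M * ENNReal.ofReal h ≤ distMeasure δ L (Ici (t + r)) := by
    rw [← show t + r + h - (t + r) = h by ring, ← Real.volume_Ico]
    refine (mul_le_withDensity_apply measurableSet_Ico fun x hx =>
      ENNReal.ofReal_le_ofReal ?_).trans (measure_mono Ico_subset_Ici_self)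
    exact distDensity_antitoneOn hδ hL ⟨by linarith [hx.1], by linarith [hx.2]⟩
      ⟨by linarith, htL⟩ hx.2.le
  calc distMeasure δ L (Ico (t - r) (t + r))
      ≤ ENNReal.ofReal (4 * M) * ENNReal.ofReal (2 * r) := hinterval
    _ = ENNReal.ofReal (64 * r * L / δ) * (ENNReal.ofReal M * ENNReal.ofReal h) := by
        rw [← ENNReal.ofReal_mul (by positivity), ← ENNReal.ofReal_mul hM,
          ← ENNReal.ofReal_mul (by positivity), h_def]
        congr 1
        field_simp
        ring
    _ ≤ _ := by gcongr

lemma distMeasure_Ico_le (hδ : 0 < δ) (hL : 2 ≤ L) (hr : 0 ≤ r) (hrL : r ≤ δ / (16 * L))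
    (t : ℝ) :
    distMeasure δ L (Ico (t - r) (t + r)) ≤
      ENNReal.ofReal (64 * r * L / δ) * distMeasure δ L (Ici (t + r)) +
        ENNReal.ofReal (64 * r * L / δ / 2 ^ L) := by
  have hrh : 2 * r ≤ δ / (8 * L) := by
    rw [show δ / (8 * L) = 2 * (δ / (16 * L)) by field_simp; ring]
    linarith
  rcases le_or_gt (t + r) (δ / 8) with hlow | hlow
  · rw [measure_mono_null (Ico_subset_Iio_self.trans (Iio_subset_Iio hlow))
      distMeasure_Iio_eq_zero]
    exact zero_le
  rcases le_or_gt (t + r + δ / (8 * L)) (δ / 4) with hhigh | hhigh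
  · exact (distMeasure_Ico_le_mul_Ici hδ (by omega) hr hrh hlow.le hhigh).trans le_self_add
  · refine (distMeasure_Ico_le_of_gt hδ hL (by linarith)).trans (le_add_left ?_)
    refine ENNReal.ofReal_le_ofReal ?_
    rw [show 2 ^ L = (2 : ℝ) ^ (L - 1) * 2 by
      rw [← pow_succ, Nat.sub_add_cancel (by omega)]]
    field_simp
    nlinarith

lemma distMeasure_real_Ico_le [IsFiniteMeasure (distMeasure δ L)]
    (hδ : 0 < δ) (hL : 2 ≤ L) (hr : 0 ≤ r) (hrL : r ≤ δ / (16 * L)) (t : ℝ) :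
    (distMeasure δ L).real (Ico (t - r) (t + r)) ≤
      64 * r * L / δ * (distMeasure δ L).real (Ici (t + r)) + 64 * r * L / δ / 2 ^ L := by
  have h := ENNReal.toReal_mono (by finiteness) (distMeasure_Ico_le hδ hL hr hrL t)
  rwa [ENNReal.toReal_add (by finiteness) (by finiteness), ENNReal.toReal_mul,
    ENNReal.toReal_ofReal (by positivity), ENNReal.toReal_ofReal (by positivity)] at h

end DistMeasure

/-- There is an absolute constant `c > 0` with the following property.  Let
`(Z,d)` be a finite metric space, `P = {p_1, …, p_m} ⊆ Z` with `m ≥ 2` and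
`diam(P) > 0`, and let `n = 2^L ≥ max(m,4)` be a power of two.  Let
`β_1, …, β_m` be independent random variables, each with density
`f = distDensity (diam P) L` (the density of `dist(diam P, n)`), and define the
random blocks `P_i = {x ∈ P \ (P_1 ∪ ⋯ ∪ P_{i-1}) : d(x,p_i) ≤ β_i}`.  Then for
every `y ∈ Z` and every `0 ≤ r ≤ diam(P)/(16 log₂ n)`, the expected number of
indices `i` with `P_i ∩ B(y,r) ≠ ∅` is at most `1 + c·(r/diam P)·log₂ n`. -/
theorem expected_blocks_intersecting_ball_le :
    ∃ c : ℝ, 0 < c ∧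
      ∀ (Z : Type) [MetricSpace Z] [Finite Z]
        (m : ℕ) (_ : 2 ≤ m) (p : Fin m → Z) (_ : Function.Injective p)
        (P : Set Z) (_ : P = Set.range p) (_ : 0 < Metric.diam P)
        (L : ℕ) (_ : 2 ≤ L) (_ : m ≤ 2^L)
        (Ω : Type) [MeasurableSpace Ω] (μ : Measure Ω) [IsProbabilityMeasure μ]
        (β : Fin m → Ω → ℝ) (_ : ∀ i, Measurable (β i))
        (_ : ProbabilityTheory.iIndepFun β μ)
        (_ : ∀ i, Measure.map (β i) μ =
          volume.withDensity (fun x => ENNReal.ofReal (distDensity (Metric.diam P) L x)))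
        (Pblk : Fin m → Ω → Set Z)
        (_ : ∀ ω i, Pblk i ω =
          {x | x ∈ P ∧ (∀ j, j < i → x ∉ Pblk j ω) ∧ dist x (p i) ≤ β i ω})
        (y : Z) (r : ℝ) (_ : 0 ≤ r) (_ : r ≤ Metric.diam P / (16 * (L:ℝ))),
        (∫ ω, (∑ i : Fin m,
            if (Pblk i ω ∩ Metric.closedBall y r).Nonempty then (1:ℝ) else 0) ∂μ)
          ≤ 1 + c * (r / Metric.diam P) * (L:ℝ) := by
  refine ⟨128, by norm_num, ?_⟩
  intro Z _ _ m hm p _ P _ hδ L hL hmL Ω _ μ _ β hβ hind hlaw Pblk hPblk y r hr hrL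
  set δ := Metric.diam P
  have hlaw' : ∀ i, μ.map (β i) = distMeasure δ L := hlaw
  have : IsProbabilityMeasure (distMeasure δ L) :=
    hlaw' ⟨0, by omega⟩ ▸ Measure.isProbabilityMeasure_map (hβ _).aemeasurable
  set a := 64 * r * L / δ
  have hcount := integral_sum_meeting_closedBall_le (μ := μ) hβ (fun ω i => hPblk ω i) y r
  have hcut := sum_measureReal_mem_and_forall_lt_mem_le hβ hind hlaw' (b := a / 2 ^ L)
    (by positivity) (by positivity) (distMeasure_real_Ico_le hδ hL hr hrL) fun i => dist (p i) y
  have hmL' : m * (a / 2 ^ L) ≤ a := by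
    rw [mul_div_left_comm]
    exact mul_le_of_le_one_right (by positivity)
      ((div_le_one (by positivity)).2 (by exact_mod_cast hmL))
  rw [Fintype.card_fin] at hcut
  calc _ ≤ 1 + (a + m * (a / 2 ^ L)) := by linarith
    _ ≤ 1 + 128 * (r / δ) * L := by
        rw [show 128 * (r / δ) * L = a + a by ring]
        linarith
end

section
/- Let X and Y be finite point sets with a metric d on X ∪ Y, let α ≥ 1, let P ⊆ X have at least two points, and let 0 < λ < 1 and γ ≥ 1. Let 𝒪 be a cover of P (a finite collection of balls centered at points of Y whose union contains P) such that: (i) 𝒪 has minimum cost among all covers of P by balls centered at points of Y; (ii) every ball of 𝒪 intersects P; and (iii) every ball of 𝒪 has radius strictly less than 2α·diam(P)/λ. Then the number of balls in 𝒪 of radius at least diam(P)/γ is at most (9αγ/λ)^α. -/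
/-!
Take a ball `B(y, r)` of `𝒪` of radius at least `diam P / γ`. It meets `P`, so `B(y, r + diam P)`
alone covers `P`, and optimality gives `cost 𝒪 ≤ (r + diam P)^α ≤ (3α diam P / λ)^α`. On the other
hand each of the `N` large balls contributes at least `(diam P / γ)^α` to the cost, whence
`N ≤ (3αγ/λ)^α`.
-/

open scoped Classical

open Finset

namespace MCC

section Cost

variable {ι : Type*}

noncomputable def cost (α : ℝ) (O : Finset (ι × ℝ)) : ℝ :=
  ∑ br ∈ O, br.2 ^ α

lemma card_filter_mul_rpow_le_cost {O : Finset (ι × ℝ)} (hO : ∀ br ∈ O, 0 ≤ br.2) {α t : ℝ}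
    (hα : 0 ≤ α) (ht : 0 ≤ t) :
    (#(O.filter fun br => t ≤ br.2) : ℝ) * t ^ α ≤ cost α O := by
  set F := O.filter fun br => t ≤ br.2
  calc (#F : ℝ) * t ^ α ≤ ∑ br ∈ F, br.2 ^ α := by
        simpa only [nsmul_eq_mul] using
          card_nsmul_le_sum F (fun br => br.2 ^ α) (t ^ α)
            fun br hbr => Real.rpow_le_rpow ht (mem_filter.mp hbr).2 hα
    _ ≤ cost α O := sum_le_sum_of_subset_of_nonneg (filter_subset _ _)
        fun br hbr _ => Real.rpow_nonneg (hO br hbr) α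

lemma card_filter_le_rpow_of_cost_le {O : Finset (ι × ℝ)} (hO : ∀ br ∈ O, 0 ≤ br.2)
    {α c t : ℝ} (hα : 0 < α) (hc : 0 ≤ c) (ht : 0 < t) (hcost : cost α O ≤ (c * t) ^ α) :
    (#(O.filter fun br => t ≤ br.2) : ℝ) ≤ c ^ α := by
  rw [Real.mul_rpow hc ht.le] at hcost
  exact le_of_mul_le_mul_right ((card_filter_mul_rpow_le_cost hO hα.le ht.le).trans hcost)
    (Real.rpow_pos_of_pos ht α)

end Cost

section Cover

variable {W : Type*} [MetricSpace W]

def IsBallCover (Y P : Finset W) (O : Finset (W × ℝ)) : Prop :=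
  (∀ br ∈ O, br.1 ∈ Y ∧ 0 ≤ br.2) ∧ ∀ x ∈ P, ∃ br ∈ O, dist x br.1 ≤ br.2

lemma isBallCover_singleton_add_diam {Y P : Finset W} {y a : W} {r : ℝ} (hy : y ∈ Y)
    (hr : 0 ≤ r) (ha : a ∈ P) (hay : dist a y ≤ r) :
    IsBallCover Y P {(y, r + Metric.diam (P : Set W))} := by
  refine ⟨?_, fun x hx => ⟨_, mem_singleton_self _, ?_⟩⟩
  · rintro br hbr
    rw [mem_singleton.mp hbr]
    exact ⟨hy, add_nonneg hr Metric.diam_nonneg⟩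
  · calc dist x y ≤ dist x a + dist a y := dist_triangle x a y
      _ ≤ Metric.diam (P : Set W) + r :=
        add_le_add (Metric.dist_le_diam_of_mem P.finite_toSet.isBounded hx ha) hay
      _ = r + Metric.diam (P : Set W) := add_comm _ _

lemma cost_le_rpow_add_diam_of_forall_cost_le {Y P : Finset W} {O : Finset (W × ℝ)} {α : ℝ}
    (hopt : ∀ O', IsBallCover Y P O' → cost α O ≤ cost α O') {y a : W} {r : ℝ}
    (hy : y ∈ Y) (hr : 0 ≤ r) (ha : a ∈ P) (hay : dist a y ≤ r) :
    cost α O ≤ (r + Metric.diam (P : Set W)) ^ α := by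
  simpa [cost] using hopt _ (isBallCover_singleton_add_diam hy hr ha hay)

end Cover

end MCC

open MCC

theorem mcc_structure_lemma_general
    {W : Type*} [MetricSpace W] (Y : Finset W) (α : ℝ) (hα : 1 ≤ α)
    (P : Finset W)
    (lam γ : ℝ) (hlam0 : 0 < lam) (hlam1 : lam < 1) (hγ : 1 ≤ γ)
    (O : Finset (W × ℝ))
    (hOballs : ∀ br ∈ O, br.1 ∈ Y ∧ 0 ≤ br.2)
    (hOopt : ∀ O' : Finset (W × ℝ),
      (∀ br ∈ O', br.1 ∈ Y ∧ 0 ≤ br.2) →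
      (∀ x ∈ P, ∃ br ∈ O', dist x br.1 ≤ br.2) →
      (∑ br ∈ O, br.2 ^ α) ≤ ∑ br ∈ O', br.2 ^ α)
    (hOmeets : ∀ br ∈ O, ∃ x ∈ P, dist x br.1 ≤ br.2)
    (hOsmall : ∀ br ∈ O, br.2 < 2 * α * Metric.diam (P : Set W) / lam) :
    ((O.filter (fun br => Metric.diam (P : Set W) / γ ≤ br.2)).card : ℝ)
      ≤ (9 * α * γ / lam) ^ α := by
  set D := Metric.diam (P : Set W)
  have hγ0 : 0 < γ := by linarith
  rcases (O.filter fun br => D / γ ≤ br.2).eq_empty_or_nonempty with hF | ⟨⟨y, r⟩, hyr⟩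
  · rw [hF, card_empty, Nat.cast_zero]
    positivity
  obtain ⟨hyrO, -⟩ := mem_filter.mp hyr
  obtain ⟨hy, hr⟩ := hOballs _ hyrO
  obtain ⟨a, ha, hay⟩ := hOmeets _ hyrO
  have hrD : r * lam < 2 * α * D := (lt_div_iff₀ hlam0).mp (hOsmall _ hyrO)
  have hD : 0 < D := by nlinarith
  have hcost : cost α O ≤ (r + D) ^ α :=
    cost_le_rpow_add_diam_of_forall_cost_le (fun O' h => hOopt O' h.1 h.2) hy hr ha hay
  have hrD3 : r + D ≤ 3 * α * γ / lam * (D / γ) := by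
    rw [show 3 * α * γ / lam * (D / γ) = 3 * α * D / lam by field_simp, le_div_iff₀ hlam0]
    nlinarith
  calc _ ≤ (3 * α * γ / lam) ^ α :=
        card_filter_le_rpow_of_cost_le (fun br h => (hOballs br h).2) (by linarith)
          (by positivity) (by positivity)
          (hcost.trans (Real.rpow_le_rpow (by positivity) hrD3 (by linarith)))
    _ ≤ (9 * α * γ / lam) ^ α := by gcongr; linarith

/-- Structure lemma for MCC.  Let `X` (clients) and `Y` (servers) be finite
point sets in a metric space `W` (playing the role of `X ∪ Y`), let `α ≥ 1`,
`P ⊆ X` with at least two points, `0 < λ < 1` and `γ ≥ 1`.  A cover of `P` is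
a finite collection of balls (encoded as center–radius pairs) with centers in
`Y` and nonnegative radii whose union contains `P`; its cost is the sum of the
`α`-th powers of the radii.  If `𝒪` is a cover of `P` of minimum cost, every
ball of `𝒪` intersects `P`, and every ball of `𝒪` has radius strictly less
than `2α·diam(P)/λ`, then the number of balls in `𝒪` of radius at least
`diam(P)/γ` is at most `(9αγ/λ)^α`. -/
theorem mcc_structure_lemma
    {W : Type*} [MetricSpace W] (X Y : Finset W) (α : ℝ) (hα : 1 ≤ α)
    (P : Finset W) (hPX : P ⊆ X) (hP : 2 ≤ P.card)
    (lam γ : ℝ) (hlam0 : 0 < lam) (hlam1 : lam < 1) (hγ : 1 ≤ γ)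
    (O : Finset (W × ℝ))
    (hOballs : ∀ br ∈ O, br.1 ∈ Y ∧ 0 ≤ br.2)
    (hOcover : ∀ x ∈ P, ∃ br ∈ O, dist x br.1 ≤ br.2)
    (hOopt : ∀ O' : Finset (W × ℝ),
      (∀ br ∈ O', br.1 ∈ Y ∧ 0 ≤ br.2) →
      (∀ x ∈ P, ∃ br ∈ O', dist x br.1 ≤ br.2) →
      (∑ br ∈ O, br.2 ^ α) ≤ ∑ br ∈ O', br.2 ^ α)
    (hOmeets : ∀ br ∈ O, ∃ x ∈ P, dist x br.1 ≤ br.2)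
    (hOsmall : ∀ br ∈ O, br.2 < 2 * α * Metric.diam (P : Set W) / lam) :
    ((O.filter (fun br => Metric.diam (P : Set W) / γ ≤ br.2)).card : ℝ)
      ≤ (9 * α * γ / lam) ^ α :=
  mcc_structure_lemma_general Y α hα P lam γ hlam0 hlam1 hγ O hOballs hOopt hOmeets hOsmall
end

section
/- Let (Z,d) be a metric space, α ≥ 1, 0 < λ ≤ 1, and let P ⊆ Z be a finite nonempty set. Suppose y₀ ∈ Z and R > 0 satisfy: the ball B(y₀,R) = {z ∈ Z : d(z,y₀) ≤ R} intersects P, and R ≥ 2α·diam(P)/λ. Then P is contained in the concentric ball B(y₀, (1 + λ/(2α))·R), and the cost of this single ball satisfies ((1 + λ/(2α))·R)^α ≤ (1 + λ)·R^α. In particular, any cover of P containing a ball of radius R ≥ 2α·diam(P)/λ that intersects P can be replaced by a single-ball cover of cost at most (1 + λ) times the cost of that one ball. -/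
/-!
All of `P` lies within `diam P` of a point of `B(y₀, R)`, hence in `B(y₀, R + diam P)`, and the
hypothesis on `R` gives `diam P ≤ (λ / 2α) R`. For the cost, `(1 + t/α)^α ≤ exp t` with
`t = λ/2`, and `exp (λ/2) ≤ 1/(1 - λ/2) ≤ 1 + λ` for `0 ≤ λ ≤ 1`.
-/

open Real Metric

theorem Metric.subset_closedBall_add_diam {Z : Type*} [PseudoMetricSpace Z] {s : Set Z}
    {x y : Z} {r : ℝ} (hs : Bornology.IsBounded s) (hx : x ∈ s) (hxy : dist x y ≤ r) :
    s ⊆ closedBall y (r + diam s) := fun p hp =>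
  calc dist p y ≤ dist p x + dist x y := dist_triangle p x y
    _ ≤ diam s + r := add_le_add (dist_le_diam_of_mem hs hp hx) hxy
    _ = r + diam s := add_comm _ _

theorem Real.one_add_div_rpow_le_exp {t α : ℝ} (hα : 0 < α) (ht : -α ≤ t) :
    (1 + t / α) ^ α ≤ exp t := by
  have hbase : 0 ≤ 1 + t / α := by
    rw [← neg_le_iff_add_nonneg', le_div_iff₀ hα]
    linarith
  calc (1 + t / α) ^ α ≤ exp (t / α) ^ α := by
        gcongr
        linarith [add_one_le_exp (t / α)]
    _ = exp t := by rw [← exp_mul, div_mul_cancel₀ t hα.ne']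

theorem Real.exp_half_le_one_add {x : ℝ} (h0 : 0 ≤ x) (h1 : x ≤ 1) : exp (x / 2) ≤ 1 + x :=
  calc exp (x / 2) ≤ 1 / (1 - x / 2) := exp_bound_div_one_sub_of_interval (by linarith) (by linarith)
    _ ≤ 1 + x := by
      rw [div_le_iff₀ (by linarith)]
      nlinarith

theorem Real.one_add_div_two_mul_rpow_le {lam α : ℝ} (hα : 0 < α) (h0 : 0 ≤ lam) (h1 : lam ≤ 1) :
    (1 + lam / (2 * α)) ^ α ≤ 1 + lam :=
  calc (1 + lam / (2 * α)) ^ α = (1 + lam / 2 / α) ^ α := by rw [div_div]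
    _ ≤ exp (lam / 2) := one_add_div_rpow_le_exp hα (by linarith)
    _ ≤ 1 + lam := exp_half_le_one_add h0 h1

theorem single_ball_replacement_general
    {Z : Type*} [MetricSpace Z] (α lam : ℝ) (hα : 1 ≤ α)
    (hlam0 : 0 < lam) (hlam1 : lam ≤ 1)
    (P : Set Z) (hPfin : P.Finite)
    (y₀ : Z) (R : ℝ) (hR : 0 < R)
    (hmeet : ∃ x ∈ P, dist x y₀ ≤ R)
    (hbig : 2 * α * Metric.diam P / lam ≤ R) :
    P ⊆ Metric.closedBall y₀ ((1 + lam / (2 * α)) * R) ∧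
    ((1 + lam / (2 * α)) * R) ^ α ≤ (1 + lam) * R ^ α := by
  have hα0 : 0 < α := zero_lt_one.trans_le hα
  have hdiam : diam P ≤ lam / (2 * α) * R := by
    rw [div_mul_eq_mul_div, le_div_iff₀ (by positivity)]
    linarith [(div_le_iff₀ hlam0).mp hbig]
  obtain ⟨x, hxP, hxy⟩ := hmeet
  refine ⟨(subset_closedBall_add_diam hPfin.isBounded hxP hxy).trans
    (closedBall_subset_closedBall (by linarith)), ?_⟩
  rw [mul_rpow (by positivity) hR.le]
  gcongr
  exact one_add_div_two_mul_rpow_le hα0 hlam0.le hlam1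

/-- Let `(Z,d)` be a metric space, `α ≥ 1`, `0 < λ ≤ 1`, and `P ⊆ Z` a finite
nonempty set.  Suppose `y₀ ∈ Z` and `R > 0` are such that the ball `B(y₀,R)`
intersects `P` and `R ≥ 2α·diam(P)/λ`.  Then `P` is contained in the
concentric ball `B(y₀, (1 + λ/(2α))·R)`, and the cost of this single ball
satisfies `((1 + λ/(2α))·R)^α ≤ (1 + λ)·R^α`.  In particular, any cover of `P`
containing such a ball can be replaced by a single-ball cover of cost at most
`(1 + λ)` times the cost of that one ball. -/
theorem single_ball_replacement
    {Z : Type*} [MetricSpace Z] (α lam : ℝ) (hα : 1 ≤ α)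
    (hlam0 : 0 < lam) (hlam1 : lam ≤ 1)
    (P : Set Z) (hPfin : P.Finite) (hPne : P.Nonempty)
    (y₀ : Z) (R : ℝ) (hR : 0 < R)
    (hmeet : ∃ x ∈ P, dist x y₀ ≤ R)
    (hbig : 2 * α * Metric.diam P / lam ≤ R) :
    P ⊆ Metric.closedBall y₀ ((1 + lam / (2 * α)) * R) ∧
    ((1 + lam / (2 * α)) * R) ^ α ≤ (1 + lam) * R ^ α :=
  single_ball_replacement_general α lam hα hlam0 hlam1 P hPfin y₀ R hR hmeet hbig
end

section
/- Let (X,d) be a finite metric space, let α ≥ 1, let P ⊆ X have at least two points, let κ ≥ 1 be an integer, and let γ ≥ 1 be real. Let 𝒪 be a cover of P consisting of at most κ balls centered at points of X, having minimum cost among all covers of P by at most κ balls centered at points of X. Then the number of balls in 𝒪 of radius at least diam(P)/γ is at most γ^α. -/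
open scoped Classical

/-- Structure lemma for `k`-clustering.  Let `(X,d)` be a finite metric space,
`α ≥ 1`, `P ⊆ X` with at least two points, `κ ≥ 1` an integer, and `γ ≥ 1`
real.  A solution is a finite collection of at most `κ` balls (encoded as
center–radius pairs) with centers in `X` and nonnegative radii whose union
contains `P`; its cost is the sum of the `α`-th powers of the radii.  If `𝒪`
is such a solution of minimum cost among all solutions with at most `κ` balls,
then the number of balls in `𝒪` of radius at least `diam(P)/γ` is at most
`γ^α`. -/
theorem clustering_structure_lemma
    {X : Type*} [MetricSpace X] [Fintype X] (α : ℝ) (hα : 1 ≤ α)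
    (P : Finset X) (hP : 2 ≤ P.card) (κ : ℕ) (hκ : 1 ≤ κ)
    (γ : ℝ) (hγ : 1 ≤ γ)
    (O : Finset (X × ℝ))
    (hOballs : ∀ br ∈ O, 0 ≤ br.2)
    (hOcard : O.card ≤ κ)
    (hOcover : ∀ x ∈ P, ∃ br ∈ O, dist x br.1 ≤ br.2)
    (hOopt : ∀ O' : Finset (X × ℝ),
      (∀ br ∈ O', 0 ≤ br.2) → O'.card ≤ κ →
      (∀ x ∈ P, ∃ br ∈ O', dist x br.1 ≤ br.2) →
      (∑ br ∈ O, br.2 ^ α) ≤ ∑ br ∈ O', br.2 ^ α) :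
    ((O.filter (fun br => Metric.diam (P : Set X) / γ ≤ br.2)).card : ℝ)
      ≤ γ ^ α := by

  classical
  set D := Metric.diam (P : Set X) with hD
  have hbd : Bornology.IsBounded (P : Set X) := P.finite_toSet.isBounded
  obtain ⟨x, hx, y, hy, hxy⟩ := Finset.one_lt_card.mp hP
  have hDpos : 0 < D := lt_of_lt_of_le (dist_pos.mpr hxy)
    (Metric.dist_le_diam_of_mem hbd hx hy)
  have hγ0 : (0:ℝ) < γ := lt_of_lt_of_le one_pos hγ
  have hα0 : (0:ℝ) ≤ α := le_trans zero_le_one hα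
  have hopt : (∑ br ∈ O, br.2 ^ α) ≤ D ^ α := by
    have h := hOopt {(x, D)}
      (by intro br hbr; simp only [Finset.mem_singleton] at hbr; subst hbr; exact hDpos.le)
      (by simpa using hκ)
      (by
        intro z hz
        exact ⟨(x, D), Finset.mem_singleton_self _,
          Metric.dist_le_diam_of_mem hbd hz hx⟩)
    simpa using h
  set S := O.filter (fun br => D / γ ≤ br.2) with hS
  have hlow : (S.card : ℝ) * (D / γ) ^ α ≤ ∑ br ∈ S, br.2 ^ α := by
    have := Finset.card_nsmul_le_sum S (fun br => br.2 ^ α) ((D / γ) ^ α)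
      (fun br hbr => by
        have hmem := Finset.mem_filter.mp hbr
        exact Real.rpow_le_rpow (div_nonneg hDpos.le hγ0.le) hmem.2 hα0)
    simpa [nsmul_eq_mul] using this
  have hsub : (∑ br ∈ S, br.2 ^ α) ≤ ∑ br ∈ O, br.2 ^ α :=
    Finset.sum_le_sum_of_subset_of_nonneg (Finset.filter_subset _ _)
      (fun br hbr _ => Real.rpow_nonneg (hOballs br hbr) α)
  have hkey : (S.card : ℝ) * (D / γ) ^ α ≤ D ^ α :=
    le_trans hlow (le_trans hsub hopt)
  have hdiv : (D / γ) ^ α = D ^ α / γ ^ α := Real.div_rpow hDpos.le hγ0.le α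
  have hDα : (0:ℝ) < D ^ α := Real.rpow_pos_of_pos hDpos α
  have hγα : (0:ℝ) < γ ^ α := Real.rpow_pos_of_pos hγ0 α
  rw [hdiv] at hkey
  rw [div_eq_mul_inv] at hkey
  nlinarith [mul_pos hDα (inv_pos.mpr hγα), mul_inv_cancel₀ hγα.ne']
end
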